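/- Suppose $u, v : [0,a] \times [0,b] \to \mathbb{B}$ (a Banach space) are continuous and satisfy, for all $(x,y)$, $|v(x,y) - u(x,y)| \le \varepsilon C_0 + L \int_0^x \psi'(s)(\psi(x)-\psi(s))^{\alpha-1} \sup_{y' \in [0,b]} |v(s,y') - u(s,y')|\, ds$, where $C_0, L, \varepsilon > 0$, $0 < \alpha \le 1$, and $\psi$ is increasing $C^1$ with $\psi' > 0$. Then $\sup_{y \in [0,b]} |v(x,y) - u(x,y)| \le \varepsilon C_0\, \mathbb{E}_\alpha\big(L\, \Gamma(\alpha)(\psi(x)-\psi(0))^{\alpha}\big)$ for all $x \in [0,a]$. -/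

import Mathlib

open Real MeasureTheory intervalIntegral Set

noncomputable def mittagLeffler (α z : ℝ) : ℝ := ∑' k : ℕ, z ^ k / Real.Gamma (α * k + 1)

/-!
Put `φ x = ⨆ y, ‖v x y - u x y‖`, bounded by some `M` by compactness, and
`E k x = (L Γ(α))^k (ψ x - ψ 0)^(α k) / Γ(α k + 1)`. The substitution `t = ψ s` turns
`L ∫₀ˣ ψ' s (ψ x - ψ s)^(α-1) E k s ds` into a Beta integral, which equals `E (k+1) x`. Iterating
the hypothesis `φ ≤ ε C₀ + L ∫₀ˣ ψ' s (ψ x - ψ s)^(α-1) φ s ds` therefore gives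
`φ ≤ ε C₀ ∑_{k<n} E k + M E n` for every `n`. The terms `E k x` are those of the Mittag-Leffler
series, which converges by the ratio test because `Γ(x) / Γ(x + α) = B(α, x) / Γ(α) → 0`; so
`E n x → 0` and the bound follows.
-/

open Filter Topology

theorem integral_rpow_mul_one_sub_rpow {p q : ℝ} (hp : 0 < p) (hq : 0 < q) :
    ∫ τ in (0:ℝ)..1, τ ^ (p - 1) * (1 - τ) ^ (q - 1) = Gamma p * Gamma q / Gamma (p + q) := by
  have hB := Complex.Gamma_mul_Gamma_eq_betaIntegral (s := p) (t := q)
    (by simpa using hp) (by simpa using hq)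
  have hreal : Complex.betaIntegral p q =
      ((∫ τ in (0:ℝ)..1, τ ^ (p - 1) * (1 - τ) ^ (q - 1) : ℝ) : ℂ) := by
    rw [Complex.betaIntegral, ← intervalIntegral.integral_ofReal]
    refine intervalIntegral.integral_congr fun τ hτ => ?_
    rw [uIcc_of_le zero_le_one] at hτ
    push_cast
    rw [Complex.ofReal_cpow hτ.1, Complex.ofReal_cpow (sub_nonneg.mpr hτ.2)]
    push_cast
    ring_nf
  rw [hreal, ← Complex.ofReal_add, Complex.Gamma_ofReal, Complex.Gamma_ofReal,
    Complex.Gamma_ofReal, ← Complex.ofReal_mul, ← Complex.ofReal_mul] at hB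
  rw [eq_div_iff (Gamma_pos_of_pos (add_pos hp hq)).ne', mul_comm]
  exact_mod_cast hB.symm

theorem integral_sub_rpow_mul_sub_rpow {p q c₀ c₁ : ℝ} (hp : 0 < p) (hq : 0 < q) (h : c₀ < c₁) :
    ∫ t in c₀..c₁, (c₁ - t) ^ (q - 1) * (t - c₀) ^ (p - 1) =
      Gamma p * Gamma q / Gamma (p + q) * (c₁ - c₀) ^ (p + q - 1) := by
  set d := c₁ - c₀ with hd
  have hd0 : 0 < d := sub_pos.mpr h
  have hsub := intervalIntegral.smul_integral_comp_mul_add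
    (fun t => (c₁ - t) ^ (q - 1) * (t - c₀) ^ (p - 1)) d c₀ (a := 0) (b := 1)
  simp only [mul_zero, zero_add, mul_one, hd, sub_add_cancel] at hsub
  rw [← hsub, smul_eq_mul, ← hd]
  have hscale : ∀ τ ∈ uIcc (0:ℝ) 1, (c₁ - (d * τ + c₀)) ^ (q - 1) * (d * τ + c₀ - c₀) ^ (p - 1)
      = d ^ (q - 1) * d ^ (p - 1) * (τ ^ (p - 1) * (1 - τ) ^ (q - 1)) := by
    intro τ hτ
    rw [uIcc_of_le zero_le_one] at hτ
    rw [show c₁ - (d * τ + c₀) = d * (1 - τ) by rw [hd]; ring, add_sub_cancel_right,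
      mul_rpow hd0.le (sub_nonneg.mpr hτ.2), mul_rpow hd0.le hτ.1]
    ring
  have hexp : d ^ (p + q - 1) = d * (d ^ (q - 1) * d ^ (p - 1)) := by
    rw [← rpow_add hd0, show p + q - 1 = 1 + (q - 1 + (p - 1)) by ring, rpow_add hd0, rpow_one]
  rw [intervalIntegral.integral_congr hscale, intervalIntegral.integral_const_mul,
    integral_rpow_mul_one_sub_rpow hp hq, hexp]
  ring

theorem tendsto_integral_rpow_mul_one_sub_rpow_atTop {p : ℝ} (hp : 0 < p) :
    Tendsto (fun q : ℝ => ∫ τ in (0:ℝ)..1, τ ^ (p - 1) * (1 - τ) ^ (q - 1)) atTop (𝓝 0) := by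
  have hlim := intervalIntegral.tendsto_integral_filter_of_dominated_convergence
    (F := fun (q τ : ℝ) => τ ^ (p - 1) * (1 - τ) ^ (q - 1)) (f := fun _ => (0:ℝ)) (l := atTop)
    (a := 0) (b := 1) (μ := volume) (fun τ => τ ^ (p - 1))
    (Eventually.of_forall fun q => by fun_prop) ?_ (intervalIntegrable_rpow' (by linarith)) ?_
  · simpa using hlim
  · filter_upwards [eventually_ge_atTop 1] with q hq
    refine Eventually.of_forall fun τ hτ => ?_
    rw [uIoc_of_le zero_le_one] at hτ
    have h1τ : 0 ≤ 1 - τ := sub_nonneg.mpr hτ.2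
    rw [norm_mul, norm_of_nonneg (rpow_nonneg hτ.1.le _), norm_of_nonneg (rpow_nonneg h1τ _)]
    exact mul_le_of_le_one_right (rpow_nonneg hτ.1.le _)
      (rpow_le_one h1τ (by linarith [hτ.1]) (by linarith))
  · refine Eventually.of_forall fun τ hτ => ?_
    rw [uIoc_of_le zero_le_one] at hτ
    have hpow : Tendsto (fun q : ℝ => (1 - τ) ^ (q - 1)) atTop (𝓝 0) :=
      (tendsto_rpow_atTop_of_base_lt_one _ (by linarith [hτ.2]) (by linarith [hτ.1])).comp
        (tendsto_atTop_add_const_right _ (-1) tendsto_id)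
    simpa using hpow.const_mul (τ ^ (p - 1))

theorem tendsto_Gamma_div_Gamma_add_atTop {α : ℝ} (hα : 0 < α) :
    Tendsto (fun x => Gamma x / Gamma (x + α)) atTop (𝓝 0) := by
  have hbeta : ∀ᶠ x in atTop, (Gamma α)⁻¹ * ∫ τ in (0:ℝ)..1, τ ^ (α - 1) * (1 - τ) ^ (x - 1)
      = Gamma x / Gamma (x + α) := by
    filter_upwards [eventually_gt_atTop 0] with x hx
    rw [integral_rpow_mul_one_sub_rpow hα hx, add_comm α]
    field_simp [(Gamma_pos_of_pos hα).ne']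
  simpa using ((tendsto_integral_rpow_mul_one_sub_rpow_atTop hα).const_mul _).congr' hbeta

noncomputable def mittagLefflerTerm (α z : ℝ) (k : ℕ) : ℝ := z ^ k / Gamma (α * k + 1)

theorem norm_mittagLefflerTerm_succ {α : ℝ} (hα : 0 ≤ α) (z : ℝ) (k : ℕ) :
    ‖mittagLefflerTerm α z (k + 1)‖ =
      |z| * (Gamma (α * k + 1) / Gamma (α * k + 1 + α)) * ‖mittagLefflerTerm α z k‖ := by
  have hΓ₁ := Gamma_pos_of_pos (by positivity : 0 < α * k + 1)
  have hΓ₂ := Gamma_pos_of_pos (by positivity : 0 < α * k + 1 + α)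
  simp only [mittagLefflerTerm, norm_div, norm_pow, norm_eq_abs, abs_of_pos hΓ₁,
    Nat.cast_succ, mul_add_one, add_right_comm _ α 1, abs_of_pos hΓ₂]
  field_simp
  ring

theorem summable_mittagLefflerTerm {α : ℝ} (hα : 0 < α) (z : ℝ) :
    Summable (mittagLefflerTerm α z) := by
  have hratio : Tendsto (fun k : ℕ => |z| * (Gamma (α * k + 1) / Gamma (α * k + 1 + α)))
      atTop (𝓝 0) := by
    have hlin : Tendsto (fun k : ℕ => α * k + 1) atTop atTop :=
      tendsto_atTop_add_const_right _ 1 (tendsto_natCast_atTop_atTop.const_mul_atTop hα)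
    simpa using ((tendsto_Gamma_div_Gamma_add_atTop hα).comp hlin).const_mul |z|
  refine summable_of_ratio_norm_eventually_le (r := 1 / 2) (by norm_num) ?_
  filter_upwards [hratio.eventually_le_const (by norm_num : (0:ℝ) < 1 / 2)] with k hk
  rw [norm_mittagLefflerTerm_succ hα.le]
  exact mul_le_mul_of_nonneg_right hk (norm_nonneg _)

theorem mittagLefflerTerm_mul_rpow {α D : ℝ} (c : ℝ) (hD : 0 ≤ D) (k : ℕ) :
    mittagLefflerTerm α (c * D ^ α) k = c ^ k / Gamma (α * k + 1) * D ^ (α * k) := by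
  rw [mittagLefflerTerm, mul_pow, ← rpow_natCast (D ^ α), ← rpow_mul hD]
  ring

/-- The kernel of the Riemann–Liouville fractional integral of order `α` with respect to `ψ`. -/
noncomputable def psiKernel (ψ ψ' : ℝ → ℝ) (α x s : ℝ) : ℝ := ψ' s * (ψ x - ψ s) ^ (α - 1)

section PsiKernel

variable {ψ ψ' : ℝ → ℝ} {x₀ x α : ℝ}

theorem monotoneOn_Icc_of_hasDerivAt_nonneg (hψ : ∀ t ∈ Icc x₀ x, HasDerivAt ψ (ψ' t) t)
    (hψ' : ∀ t ∈ Icc x₀ x, 0 ≤ ψ' t) : MonotoneOn ψ (Icc x₀ x) :=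
  monotoneOn_of_hasDerivWithinAt_nonneg (convex_Icc x₀ x)
    (fun t ht => (hψ t ht).continuousAt.continuousWithinAt)
    (fun t ht => (hψ t (interior_subset ht)).hasDerivWithinAt)
    (fun t ht => hψ' t (interior_subset ht))

theorem psiKernel_nonneg (hψ : ∀ t ∈ Icc x₀ x, HasDerivAt ψ (ψ' t) t)
    (hψ' : ∀ t ∈ Icc x₀ x, 0 ≤ ψ' t) {s : ℝ} (hs : s ∈ Icc x₀ x) : 0 ≤ psiKernel ψ ψ' α x s :=
  mul_nonneg (hψ' s hs) <| rpow_nonneg (sub_nonneg.mpr <|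
    monotoneOn_Icc_of_hasDerivAt_nonneg hψ hψ' hs (right_mem_Icc.mpr (hs.1.trans hs.2)) hs.2) _

theorem psiKernel_mul_rpow_eq_comp_mul_deriv (γ s : ℝ) :
    psiKernel ψ ψ' α x s * (ψ s - ψ x₀) ^ γ =
      ((fun t => (ψ x - t) ^ (α - 1) * (t - ψ x₀) ^ γ) ∘ ψ) s * ψ' s := by
  simp only [psiKernel, Function.comp_apply]
  ring

theorem intervalIntegrable_psiKernel_mul_rpow (hx : x₀ ≤ x) (hα : 0 < α) {γ : ℝ} (hγ : 0 ≤ γ)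
    (hψ : ∀ t ∈ Icc x₀ x, HasDerivAt ψ (ψ' t) t) (hψ' : ∀ t ∈ Icc x₀ x, 0 ≤ ψ' t) :
    IntervalIntegrable (fun s => psiKernel ψ ψ' α x s * (ψ s - ψ x₀) ^ γ) volume x₀ x := by
  have hcont : ContinuousOn ψ (uIcc x₀ x) := fun t ht =>
    (hψ t (by rwa [uIcc_of_le hx] at ht)).continuousAt.continuousWithinAt
  have hIoo : Ioo (min x₀ x) (max x₀ x) ⊆ Icc x₀ x := by
    rw [min_eq_left hx, max_eq_right hx]; exact Ioo_subset_Icc_self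
  simp only [psiKernel_mul_rpow_eq_comp_mul_deriv]
  rw [integrable_comp_mul_deriv_iff_of_deriv_nonneg hcont (fun t ht => hψ t (hIoo ht))
    (fun t ht => hψ' t (hIoo ht))]
  have hsingular : IntervalIntegrable (fun t => (ψ x - t) ^ (α - 1)) volume (ψ x₀) (ψ x) := by
    simpa using (intervalIntegrable_rpow' (by linarith : -1 < α - 1)
      (a := ψ x - ψ x₀) (b := 0)).comp_sub_left (ψ x)
  exact hsingular.mul_continuousOn <|
    (continuousOn_id.sub continuousOn_const).rpow_const fun _ _ => Or.inr hγ

theorem integral_psiKernel_mul_rpow (hx : x₀ ≤ x) (hα : 0 < α) {γ : ℝ} (hγ : 0 ≤ γ)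
    (hψ : ∀ t ∈ Icc x₀ x, HasDerivAt ψ (ψ' t) t) (hψ' : ∀ t ∈ Icc x₀ x, 0 ≤ ψ' t) :
    ∫ s in x₀..x, psiKernel ψ ψ' α x s * (ψ s - ψ x₀) ^ γ =
      Gamma (γ + 1) * Gamma α / Gamma (γ + 1 + α) * (ψ x - ψ x₀) ^ (α + γ) := by
  have hcont : ContinuousOn ψ (uIcc x₀ x) := fun t ht =>
    (hψ t (by rwa [uIcc_of_le hx] at ht)).continuousAt.continuousWithinAt
  have hIoo : Ioo (min x₀ x) (max x₀ x) ⊆ Icc x₀ x := by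
    rw [min_eq_left hx, max_eq_right hx]; exact Ioo_subset_Icc_self
  simp only [psiKernel_mul_rpow_eq_comp_mul_deriv]
  rw [integral_comp_mul_deriv_of_deriv_nonneg hcont (fun t ht => hψ t (hIoo ht))
    (fun t ht => hψ' t (hIoo ht))]
  rcases (monotoneOn_Icc_of_hasDerivAt_nonneg hψ hψ' (left_mem_Icc.mpr hx) (right_mem_Icc.mpr hx)
    hx).eq_or_lt with heq | hlt
  · rw [heq, integral_same, sub_self, zero_rpow (by positivity), mul_zero]
  · have hbeta := integral_sub_rpow_mul_sub_rpow (by positivity : 0 < γ + 1) hα hlt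
    rw [add_sub_cancel_right] at hbeta
    rw [hbeta, show γ + 1 + α - 1 = α + γ by ring]

theorem mul_integral_psiKernel_mul_term (hx : x₀ ≤ x) (hα : 0 < α)
    (hψ : ∀ t ∈ Icc x₀ x, HasDerivAt ψ (ψ' t) t) (hψ' : ∀ t ∈ Icc x₀ x, 0 ≤ ψ' t) (L : ℝ)
    (k : ℕ) :
    L * ∫ s in x₀..x, psiKernel ψ ψ' α x s *
        ((L * Gamma α) ^ k / Gamma (α * k + 1) * (ψ s - ψ x₀) ^ (α * k)) =
      (L * Gamma α) ^ (k + 1) / Gamma (α * ↑(k + 1) + 1) * (ψ x - ψ x₀) ^ (α * ↑(k + 1)) := by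
  simp_rw [mul_left_comm (psiKernel ψ ψ' α x _)]
  rw [intervalIntegral.integral_const_mul,
    integral_psiKernel_mul_rpow hx hα (by positivity) hψ hψ',
    show α * ↑(k + 1) + 1 = α * k + 1 + α by push_cast; ring,
    show α * ↑(k + 1) = α + α * k by push_cast; ring]
  have hΓ := (Gamma_pos_of_pos (by positivity : 0 < α * k + 1)).ne'
  field_simp
  ring

theorem intervalIntegrable_psiKernel_mul_term (hx : x₀ ≤ x) (hα : 0 < α)
    (hψ : ∀ t ∈ Icc x₀ x, HasDerivAt ψ (ψ' t) t) (hψ' : ∀ t ∈ Icc x₀ x, 0 ≤ ψ' t) (c : ℝ)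
    (k : ℕ) :
    IntervalIntegrable (fun s => psiKernel ψ ψ' α x s *
      (c ^ k / Gamma (α * k + 1) * (ψ s - ψ x₀) ^ (α * k))) volume x₀ x := by
  simp_rw [mul_left_comm (psiKernel ψ ψ' α x _)]
  exact (intervalIntegrable_psiKernel_mul_rpow hx hα (by positivity) hψ hψ').const_mul _

end PsiKernel

theorem intervalIntegral_mono_of_nonneg {f g : ℝ → ℝ} {a b : ℝ} (hab : a ≤ b)
    (hf : ∀ s ∈ Ioc a b, 0 ≤ f s) (hg : IntervalIntegrable g volume a b)
    (hfg : ∀ s ∈ Ioc a b, f s ≤ g s) : ∫ s in a..b, f s ≤ ∫ s in a..b, g s := by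
  rw [integral_of_le hab, integral_of_le hab]
  exact integral_mono_of_nonneg (ae_restrict_of_forall_mem measurableSet_Ioc hf) hg.1
    (ae_restrict_of_forall_mem measurableSet_Ioc hfg)

theorem le_sum_add_of_le_add_integral {a c L M : ℝ} {K : ℝ → ℝ → ℝ} {E : ℕ → ℝ → ℝ}
    {φ : ℝ → ℝ} (hL : 0 ≤ L) (hK : ∀ x ∈ Icc 0 a, ∀ s ∈ Icc 0 x, 0 ≤ K x s)
    (hE₀ : ∀ x ∈ Icc 0 a, E 0 x = 1)
    (hE_int : ∀ k, ∀ x ∈ Icc 0 a, IntervalIntegrable (fun s => K x s * E k s) volume 0 x)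
    (hE_succ : ∀ k, ∀ x ∈ Icc 0 a, L * ∫ s in (0:ℝ)..x, K x s * E k s = E (k + 1) x)
    (hφ₀ : ∀ x ∈ Icc 0 a, 0 ≤ φ x) (hφM : ∀ x ∈ Icc 0 a, φ x ≤ M)
    (hφ : ∀ x ∈ Icc 0 a, φ x ≤ c + L * ∫ s in (0:ℝ)..x, K x s * φ s) (n : ℕ) :
    ∀ x ∈ Icc 0 a, φ x ≤ c * ∑ k ∈ Finset.range n, E k x + M * E n x := by
  induction n with
  | zero => intro x hx; simpa [hE₀ x hx] using hφM x hx
  | succ n ih =>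
    intro x hx
    have hsub : Ioc 0 x ⊆ Icc 0 a := fun s hs => ⟨hs.1.le, hs.2.trans hx.2⟩
    have hsplit : ∀ s, K x s * (c * ∑ k ∈ Finset.range n, E k s + M * E n s) =
        c * ∑ k ∈ Finset.range n, K x s * E k s + M * (K x s * E n s) := fun s => by
      rw [mul_add, Finset.mul_sum, Finset.mul_sum, Finset.mul_sum, mul_left_comm _ M]
      exact congrArg (· + _) (Finset.sum_congr rfl fun k _ => mul_left_comm _ _ _)
    have hint_sum : IntervalIntegrable (fun s => ∑ k ∈ Finset.range n, K x s * E k s)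
        volume 0 x := by
      simpa only [Finset.sum_fn] using IntervalIntegrable.sum _ fun k _ => hE_int k x hx
    have hint_n := hE_int n x hx
    have hlin : L * ∫ s in (0:ℝ)..x, K x s * (c * ∑ k ∈ Finset.range n, E k s + M * E n s) =
        c * ∑ k ∈ Finset.range n, E (k + 1) x + M * E (n + 1) x := by
      simp_rw [hsplit]
      rw [intervalIntegral.integral_add (hint_sum.const_mul c) (hint_n.const_mul M),
        intervalIntegral.integral_const_mul, intervalIntegral.integral_const_mul,
        intervalIntegral.integral_finsetSum fun k _ => hE_int k x hx, mul_add,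
        mul_left_comm, Finset.mul_sum, mul_left_comm L M, hE_succ n x hx]
      simp_rw [hE_succ _ x hx]
    have hmono : ∫ s in (0:ℝ)..x, K x s * φ s ≤
        ∫ s in (0:ℝ)..x, K x s * (c * ∑ k ∈ Finset.range n, E k s + M * E n s) := by
      refine intervalIntegral_mono_of_nonneg hx.1
        (fun s hs => mul_nonneg (hK x hx s (Ioc_subset_Icc_self hs)) (hφ₀ s (hsub hs))) ?_
        (fun s hs => mul_le_mul_of_nonneg_left (ih s (hsub hs))
          (hK x hx s (Ioc_subset_Icc_self hs)))
      simp_rw [hsplit]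
      exact (hint_sum.const_mul c).add (hint_n.const_mul M)
    calc φ x ≤ c + L * ∫ s in (0:ℝ)..x, K x s * φ s := hφ x hx
      _ ≤ c + (c * ∑ k ∈ Finset.range n, E (k + 1) x + M * E (n + 1) x) := by
        rw [← hlin]; gcongr
      _ = c * ∑ k ∈ Finset.range (n + 1), E k x + M * E (n + 1) x := by
        rw [Finset.sum_range_succ', hE₀ x hx]; ring

theorem le_mul_tsum_of_forall_le_mul_sum_add {f : ℕ → ℝ} (hf : Summable f) {y c M : ℝ}
    (h : ∀ n, y ≤ c * ∑ k ∈ Finset.range n, f k + M * f n) : y ≤ c * ∑' k, f k := by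
  have hlim : Tendsto (fun n => c * ∑ k ∈ Finset.range n, f k + M * f n) atTop
      (𝓝 (c * ∑' k, f k)) := by
    simpa using (hf.hasSum.tendsto_sum_nat.const_mul c).add (hf.tendsto_atTop_zero.const_mul M)
  exact ge_of_tendsto' hlim h

theorem stmt8_general {B : Type*} [NormedAddCommGroup B]
    (a b α ε C₀ L : ℝ) (hb : 0 < b) (hα : 0 < α) (hL : 0 < L)
    (ψ ψ' : ℝ → ℝ) (u v : ℝ → ℝ → B)
    (hψ : ∀ t ∈ Set.Icc 0 a, HasDerivAt ψ (ψ' t) t)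
    (hψ'pos : ∀ t ∈ Set.Icc 0 a, 0 < ψ' t)
    (hu : ContinuousOn (fun p : ℝ × ℝ => u p.1 p.2) (Set.Icc 0 a ×ˢ Set.Icc 0 b))
    (hv : ContinuousOn (fun p : ℝ × ℝ => v p.1 p.2) (Set.Icc 0 a ×ˢ Set.Icc 0 b))
    (hineq : ∀ x ∈ Set.Icc 0 a, ∀ y ∈ Set.Icc 0 b,
      ‖v x y - u x y‖ ≤ ε * C₀ + L * ∫ s in (0:ℝ)..x,
        ψ' s * (ψ x - ψ s) ^ (α - 1) *
          (⨆ y' : Set.Icc (0:ℝ) b, ‖v s y' - u s y'‖)) :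
    ∀ x ∈ Set.Icc 0 a,
      (⨆ y' : Set.Icc (0:ℝ) b, ‖v x y' - u x y'‖) ≤
        ε * C₀ * mittagLeffler α (L * Real.Gamma α * (ψ x - ψ 0) ^ α) := by
  intro x hx
  have : Nonempty (Icc (0:ℝ) b) := (nonempty_Icc.mpr hb.le).to_subtype
  have hψ₀ : ∀ x ∈ Icc 0 a, ∀ t ∈ Icc 0 x, HasDerivAt ψ (ψ' t) t :=
    fun x hx t ht => hψ t (Icc_subset_Icc_right hx.2 ht)
  have hψ'₀ : ∀ x ∈ Icc 0 a, ∀ t ∈ Icc 0 x, 0 ≤ ψ' t :=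
    fun x hx t ht => (hψ'pos t (Icc_subset_Icc_right hx.2 ht)).le
  obtain ⟨M, hM⟩ := (isCompact_Icc.prod isCompact_Icc).exists_bound_of_continuousOn (hv.sub hu)
  have hbound := le_sum_add_of_le_add_integral (K := psiKernel ψ ψ' α)
    (E := fun k s => (L * Gamma α) ^ k / Gamma (α * k + 1) * (ψ s - ψ 0) ^ (α * k))
    (φ := fun s => ⨆ y : Icc (0:ℝ) b, ‖v s y - u s y‖) (c := ε * C₀) (M := max M 0) hL.le
    (fun x hx s hs => psiKernel_nonneg (hψ₀ x hx) (hψ'₀ x hx) hs)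
    (fun x hx => by simp)
    (fun k x hx => intervalIntegrable_psiKernel_mul_term hx.1 hα (hψ₀ x hx) (hψ'₀ x hx) _ k)
    (fun k x hx => mul_integral_psiKernel_mul_term hx.1 hα (hψ₀ x hx) (hψ'₀ x hx) L k)
    (fun s _ => Real.iSup_nonneg fun _ => norm_nonneg _)
    (fun s hs => Real.iSup_le (fun y => (hM (s, y) ⟨hs, y.2⟩).trans (le_max_left _ _))
      (le_max_right _ _))
    (fun s hs => ciSup_le fun y => hineq s hs y y.2)
  have hD : 0 ≤ ψ x - ψ 0 := sub_nonneg.mpr <| monotoneOn_Icc_of_hasDerivAt_nonneg (hψ₀ x hx)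
    (hψ'₀ x hx) (left_mem_Icc.mpr hx.1) (right_mem_Icc.mpr hx.1) hx.1
  have hbound_x := fun n => hbound n x hx
  simp only [← mittagLefflerTerm_mul_rpow (L * Gamma α) hD] at hbound_x
  exact le_mul_tsum_of_forall_le_mul_sum_add (summable_mittagLefflerTerm hα _) hbound_x

theorem stmt8 {B : Type*} [NormedAddCommGroup B] [NormedSpace ℝ B] [CompleteSpace B]
    (a b α ε C₀ L : ℝ) (ha : 0 < a) (hb : 0 < b) (hα : 0 < α) (hα1 : α ≤ 1)
    (hε : 0 < ε) (hC₀ : 0 < C₀) (hL : 0 < L)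
    (ψ ψ' : ℝ → ℝ) (u v : ℝ → ℝ → B)
    (hψ : ∀ t ∈ Set.Icc 0 a, HasDerivAt ψ (ψ' t) t)
    (hψ'c : ContinuousOn ψ' (Set.Icc 0 a))
    (hψ'pos : ∀ t ∈ Set.Icc 0 a, 0 < ψ' t)
    (hψmono : StrictMonoOn ψ (Set.Icc 0 a))
    (hu : ContinuousOn (fun p : ℝ × ℝ => u p.1 p.2) (Set.Icc 0 a ×ˢ Set.Icc 0 b))
    (hv : ContinuousOn (fun p : ℝ × ℝ => v p.1 p.2) (Set.Icc 0 a ×ˢ Set.Icc 0 b))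
    (hineq : ∀ x ∈ Set.Icc 0 a, ∀ y ∈ Set.Icc 0 b,
      ‖v x y - u x y‖ ≤ ε * C₀ + L * ∫ s in (0:ℝ)..x,
        ψ' s * (ψ x - ψ s) ^ (α - 1) *
          (⨆ y' : Set.Icc (0:ℝ) b, ‖v s y' - u s y'‖)) :
    ∀ x ∈ Set.Icc 0 a,
      (⨆ y' : Set.Icc (0:ℝ) b, ‖v x y' - u x y'‖) ≤
        ε * C₀ * mittagLeffler α (L * Real.Gamma α * (ψ x - ψ 0) ^ α) :=
  stmt8_general a b α ε C₀ L hb hα hL ψ ψ' u v hψ hψ'pos hu hv hineq
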